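/- Let N ∈ {1, 2}, α > 0 and σ ≥ 1. There exists a constant C_α > 0, depending only on N, σ, α, such that for every Schwartz function v : ℝ^N → ℂ and every Schwartz function u : ℝ^N → ℝ satisfying u − α²Δu = |v|^{σ+1} pointwise on ℝ^N, one has |∫_{ℝ^N} u(x) |v(x)|^{σ+1} dx| ≤ C_α ‖v‖_{L^{2(σ+1)}}^{2(σ+1)}. -/

import Mathlib

open MeasureTheory Real Set
open scoped ENNReal NNReal ComplexConjugate

noncomputable section

/-- Standard basis vector of `ℝ^N`. -/
def basisVec (N : ℕ) (i : Fin N) : EuclideanSpace ℝ (Fin N) :=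
  EuclideanSpace.single i 1

/-- The Laplacian of a function on `ℝ^N`. -/
def lap {E : Type*} [NormedAddCommGroup E] [NormedSpace ℝ E]
    (N : ℕ) (u : EuclideanSpace ℝ (Fin N) → E) (x : EuclideanSpace ℝ (Fin N)) : E :=
  ∑ i : Fin N, fderiv ℝ (fun y => fderiv ℝ u y (basisVec N i)) x (basisVec N i)

/-- The `L^p` norm (with real exponent `p`) of a function on `ℝ^N`. -/
def LpN (N : ℕ) {E : Type*} [NormedAddCommGroup E]
    (f : EuclideanSpace ℝ (Fin N) → E) (p : ℝ) : ℝ :=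
  (eLpNorm f (ENNReal.ofReal p) volume).toReal

/-- The `L²` norm of the (total) derivative of a function on `ℝ^N`. -/
def gradL2 (N : ℕ) (v : EuclideanSpace ℝ (Fin N) → ℂ) : ℝ :=
  (eLpNorm (fun x => fderiv ℝ v x) 2 volume).toReal

/-- The `H¹` norm of a function on `ℝ^N`. -/
def H1norm (N : ℕ) (v : EuclideanSpace ℝ (Fin N) → ℂ) : ℝ :=
  Real.sqrt ((LpN N v 2) ^ 2 + (gradL2 N v) ^ 2)

/-! With `w = u - α²Δu = |v|^{σ+1}`, integration by parts gives
`∫ u w = ∫ u² + α² ∫ |∇u|² ≥ ∫ u²`; combined with `∫ u w ≤ (∫ u² + ∫ w²) / 2` this yields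
`0 ≤ ∫ u w ≤ ∫ w² = ‖v‖_{L^{2(σ+1)}}^{2(σ+1)}`, so `C = 1` works in every dimension. -/

open scoped SchwartzMap LineDeriv Laplacian

theorem toReal_eLpNorm_ofReal_rpow {X E : Type*} [MeasurableSpace X] {μ : Measure X}
    [NormedAddCommGroup E] {f : X → E} (hf : AEStronglyMeasurable f μ) {p : ℝ} (hp : 0 < p) :
    (eLpNorm f (ENNReal.ofReal p) μ).toReal ^ p = ∫ x, ‖f x‖ ^ p ∂μ := by
  rw [toReal_eLpNorm hf, lpNorm_eq_integral_norm_rpow_toReal (by simpa) ENNReal.ofReal_ne_top hf,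
    ENNReal.toReal_ofReal hp.le, ← Real.rpow_mul (integral_nonneg fun _ => by positivity),
    inv_mul_cancel₀ hp.ne', Real.rpow_one]

theorem integral_mul_le_integral_sq_of_integral_sq_le {X : Type*} [MeasurableSpace X]
    {μ : Measure X} {f g : X → ℝ} (hf : MemLp f 2 μ) (hg : MemLp g 2 μ)
    (h : ∫ x, f x ^ 2 ∂μ ≤ ∫ x, f x * g x ∂μ) :
    ∫ x, f x * g x ∂μ ≤ ∫ x, g x ^ 2 ∂μ := by
  have hmean : ∫ x, f x * g x ∂μ ≤ ∫ x, (f x ^ 2 + g x ^ 2) / 2 ∂μ :=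
    integral_mono (hf.integrable_mul hg) ((hf.integrable_sq.add hg.integrable_sq).div_const 2)
      fun x => by nlinarith [sq_nonneg (f x - g x)]
  rw [integral_div, integral_add hf.integrable_sq hg.integrable_sq] at hmean
  linarith

theorem SchwartzMap.lap_eq_laplacian {N : ℕ} {F : Type*} [NormedAddCommGroup F]
    [NormedSpace ℝ F] (u : 𝓢(EuclideanSpace ℝ (Fin N), F)) : lap N u = Δ u := by
  ext x
  rw [laplacian_eq_sum (EuclideanSpace.basisFun (Fin N) ℝ), sum_apply]
  simp only [lap, basisVec, EuclideanSpace.basisFun_apply, lineDerivOp_apply_eq_fderiv]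
  rfl

namespace SchwartzMap

theorem integrable_mul {E : Type*} [NormedAddCommGroup E] [NormedSpace ℝ E] [MeasurableSpace E]
    [BorelSpace E] {μ : Measure E} [μ.HasTemperateGrowth] (f g : 𝓢(E, ℝ)) :
    Integrable (fun x => f x * g x) μ :=
  (f.memLp 2 μ).integrable_mul (g.memLp 2 μ)

variable {E : Type*} [NormedAddCommGroup E] [InnerProductSpace ℝ E] [FiniteDimensional ℝ E]
  [MeasurableSpace E] [BorelSpace E] {μ : Measure E} [μ.IsAddHaarMeasure]

theorem integral_mul_laplacian_self_nonpos (u : 𝓢(E, ℝ)) : ∫ x, u x * Δ u x ∂μ ≤ 0 := by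
  simp_rw [laplacian_eq_sum (stdOrthonormalBasis ℝ E), sum_apply, Finset.mul_sum]
  rw [integral_finsetSum]
  · refine Finset.sum_nonpos fun i _ => ?_
    rw [integral_mul_lineDerivOp_right_eq_neg_left, neg_nonpos]
    exact integral_nonneg fun x => mul_self_nonneg _
  · exact fun i _ => integrable_mul u _

theorem integral_sq_le_integral_mul_sub_smul_laplacian (u : 𝓢(E, ℝ)) {c : ℝ} (hc : 0 ≤ c) :
    ∫ x, u x ^ 2 ∂μ ≤ ∫ x, u x * (u - c • Δ u) x ∂μ := by
  simp only [sub_apply, smul_apply, smul_eq_mul, mul_sub, mul_left_comm _ c]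
  rw [integral_sub (integrable_mul u u) ((integrable_mul u (Δ u)).const_mul c), integral_const_mul]
  simp only [sq]
  linarith [mul_nonpos_of_nonneg_of_nonpos hc (integral_mul_laplacian_self_nonpos (μ := μ) u)]

end SchwartzMap

theorem stmt7_general (N : ℕ) (α : ℝ) (σ : ℝ) (hσ : 1 ≤ σ) :
    ∃ C : ℝ, 0 < C ∧
      ∀ (v : SchwartzMap (EuclideanSpace ℝ (Fin N)) ℂ)
        (u : SchwartzMap (EuclideanSpace ℝ (Fin N)) ℝ),
        (∀ x, u x - α ^ 2 * lap N (fun y => u y) x = ‖v x‖ ^ (σ + 1)) →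
        |∫ x, u x * ‖v x‖ ^ (σ + 1)|
          ≤ C * (LpN N (fun x => v x) (2 * (σ + 1))) ^ (2 * (σ + 1)) := by
  refine ⟨1, one_pos, fun v u h => ?_⟩
  set w : 𝓢(EuclideanSpace ℝ (Fin N), ℝ) := u - α ^ 2 • Δ u
  have hw : ∀ x, ‖v x‖ ^ (σ + 1) = w x := fun x => by
    simpa [w, ← SchwartzMap.lap_eq_laplacian] using (h x).symm
  have hw_sq : ∀ x, w x ^ 2 = ‖v x‖ ^ (2 * (σ + 1)) := fun x => by
    rw [← hw, ← Real.rpow_natCast, ← Real.rpow_mul (norm_nonneg _), mul_comm]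
    norm_num
  have hlower : ∫ x, u x ^ 2 ≤ ∫ x, u x * w x :=
    u.integral_sq_le_integral_mul_sub_smul_laplacian (sq_nonneg α)
  have hupper := integral_mul_le_integral_sq_of_integral_sq_le (u.memLp 2) (w.memLp 2) hlower
  simp only [hw_sq] at hupper
  simp only [hw]
  rw [abs_of_nonneg ((integral_nonneg fun x => sq_nonneg _).trans hlower), one_mul, LpN,
    toReal_eLpNorm_ofReal_rpow v.continuous.aestronglyMeasurable (by linarith)]
  exact hupper

/-- for `N ∈ {1,2}`, the estimate
`|∫ u |v|^{σ+1} dx| ≤ C_α ‖v‖_{L^{2(σ+1)}}^{2(σ+1)}`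
for the solution of the Helmholtz equation `u - α²Δu = |v|^{σ+1}`. -/
theorem stmt7 (N : ℕ) (hN : N = 1 ∨ N = 2) (α : ℝ) (hα : 0 < α) (σ : ℝ) (hσ : 1 ≤ σ) :
    ∃ C : ℝ, 0 < C ∧
      ∀ (v : SchwartzMap (EuclideanSpace ℝ (Fin N)) ℂ)
        (u : SchwartzMap (EuclideanSpace ℝ (Fin N)) ℝ),
        (∀ x, u x - α ^ 2 * lap N (fun y => u y) x = ‖v x‖ ^ (σ + 1)) →
        |∫ x, u x * ‖v x‖ ^ (σ + 1)|
          ≤ C * (LpN N (fun x => v x) (2 * (σ + 1))) ^ (2 * (σ + 1)) :=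
  stmt7_general N α σ hσ
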